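/- Suppose a mixed strategy profile x and reals ū^i, u^i_s, r^i_s, f^i_s, b^i_s ∈ {0,1} (for all players i and s ∈ S_i) satisfy the MIMLP2 constraints — u^i_s = u_i(s, x), ū^i ≥ u^i_s, r^i_s = ū^i − u^i_s, r^i_s ≥ 0, x^i(s) ≤ 1 − b^i_s, f^i_s ≥ r^i_s, f^i_s ≥ U^i b^i_s — and the objective value ∑_{i=1}^n ∑_{s∈S_i} (f^i_s − U^i b^i_s) equals 0. Then x is a Nash equilibrium. -/

import Mathlib

open Finset

/-- Expected payoff `U_i(x)` of player `i` under the mixed strategy profile `x`. -/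
def expPayoff {n : ℕ} {S : Fin n → Type} [∀ i, Fintype (S i)]
    (A : Fin n → (∀ j, S j) → ℝ) (x : ∀ i, S i → ℝ) (i : Fin n) : ℝ :=
  ∑ t : ∀ j, S j, A i t * ∏ j, x j (t j)

/-- Expected payoff `u_i(s, x)` of player `i` playing the pure strategy `s` while the
other players play their mixed strategies from `x`: summing over full pure profiles `t`
with `t i = s` is the same as summing over tuples `ŝ` of pure strategies of the others. -/
def purePayoff {n : ℕ} {S : Fin n → Type} [∀ i, Fintype (S i)] [∀ i, DecidableEq (S i)]
    (A : Fin n → (∀ j, S j) → ℝ) (x : ∀ i, S i → ℝ) (i : Fin n) (s : S i) : ℝ :=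
  ∑ t : ∀ j, S j, if t i = s then A i t * ∏ j ∈ Finset.univ.erase i, x j (t j) else 0

/-- `U^i`: the maximum difference of any two payoffs of player `i`. -/
noncomputable def payoffRange {n : ℕ} {S : Fin n → Type} [∀ i, Fintype (S i)]
    [∀ i, Nonempty (S i)] (A : Fin n → (∀ j, S j) → ℝ) (i : Fin n) : ℝ :=
  Finset.univ.sup' Finset.univ_nonempty (A i) - Finset.univ.inf' Finset.univ_nonempty (A i)

/-!
The objective is a sum of the nonnegative slacks `f^i_s − U^i b^i_s`, so value `0` forces
`f^i_s = U^i b^i_s`. A strategy with `b^i_s = 0` then has `0 ≤ r^i_s ≤ f^i_s = 0`, i.e. it earns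
`ū^i`, the largest pure payoff; one with `b^i_s = 1` has `x^i(s) = 0`. So `x^i` is supported on
pure best responses, its payoff `∑ x^i(s) u_i(s, x)` is `ū^i`, and any deviation `y^i` earns the
convex combination `∑ y^i(s) u_i(s, x) ≤ ū^i`.
-/

section Payoffs

variable {n : ℕ} {S : Fin n → Type} [∀ i, Fintype (S i)] [∀ i, DecidableEq (S i)]
  (A : Fin n → (∀ j, S j) → ℝ) (x : ∀ i, S i → ℝ) (i : Fin n)

theorem expPayoff_update_eq_sum_mul_purePayoff (y : S i → ℝ) :
    expPayoff A (Function.update x i y) i = ∑ s, y s * purePayoff A x i s := by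
  have hsplit : ∀ t : ∀ j, S j, A i t * ∏ j, Function.update x i y j (t j)
      = y (t i) * (A i t * ∏ j ∈ univ.erase i, x j (t j)) := by
    intro t
    have hothers : ∀ j ∈ univ.erase i, Function.update x i y j (t j) = x j (t j) :=
      fun j hj => by rw [Function.update_of_ne (ne_of_mem_erase hj)]
    rw [← mul_prod_erase univ _ (mem_univ i), prod_congr rfl hothers, Function.update_self]
    ring
  simp only [expPayoff, purePayoff, hsplit, mul_sum, mul_ite, mul_zero]
  rw [sum_comm]
  refine sum_congr rfl fun t _ => ?_
  simp

theorem expPayoff_eq_sum_mul_purePayoff :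
    expPayoff A x i = ∑ s, x i s * purePayoff A x i s := by
  simpa using expPayoff_update_eq_sum_mul_purePayoff A x i (x i)

theorem expPayoff_update_le_of_purePayoff_le {v : ℝ} (hv : ∀ s, purePayoff A x i s ≤ v)
    {y : S i → ℝ} (hy0 : ∀ s, 0 ≤ y s) (hy1 : ∑ s, y s = 1) :
    expPayoff A (Function.update x i y) i ≤ v :=
  calc expPayoff A (Function.update x i y) i = ∑ s, y s * purePayoff A x i s :=
        expPayoff_update_eq_sum_mul_purePayoff A x i y
    _ ≤ ∑ s, y s * v := sum_le_sum fun s _ => mul_le_mul_of_nonneg_left (hv s) (hy0 s)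
    _ = v := by rw [← sum_mul, hy1, one_mul]

theorem expPayoff_eq_of_purePayoff_eq_on_support {v : ℝ}
    (hv : ∀ s, x i s ≠ 0 → purePayoff A x i s = v) (hx1 : ∑ s, x i s = 1) :
    expPayoff A x i = v :=
  calc expPayoff A x i = ∑ s, x i s * purePayoff A x i s := expPayoff_eq_sum_mul_purePayoff A x i
    _ = ∑ s, x i s * v := sum_congr rfl fun s _ => by
        by_cases hs : x i s = 0
        · simp [hs]
        · rw [hv s hs]
    _ = v := by rw [← sum_mul, hx1, one_mul]

end Payoffs

theorem eq_of_sum_sum_sub_eq_zero {ι : Type*} [Fintype ι] {κ : ι → Type*} [∀ i, Fintype (κ i)]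
    {f g : ∀ i, κ i → ℝ} (hle : ∀ i s, g i s ≤ f i s) (hsum : ∑ i, ∑ s, (f i s - g i s) = 0)
    (i : ι) (s : κ i) : f i s = g i s := by
  have hnonneg : ∀ i s, 0 ≤ f i s - g i s := fun i s => sub_nonneg.mpr (hle i s)
  have hi := (Fintype.sum_eq_zero_iff_of_nonneg fun i => sum_nonneg fun s _ => hnonneg i s).mp
    hsum
  have hs := (Fintype.sum_eq_zero_iff_of_nonneg (hnonneg i)).mp (congrFun hi i)
  exact sub_eq_zero.mp (congrFun hs s)

theorem mimlp2_optimal_gives_nash_general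
    (n : ℕ) (S : Fin n → Type)
    [∀ i, Fintype (S i)] [∀ i, Nonempty (S i)] [∀ i, DecidableEq (S i)]
    (A : Fin n → (∀ j, S j) → ℝ)
    (x : ∀ i, S i → ℝ)
    (hx0 : ∀ i s, 0 ≤ x i s) (hx1 : ∀ i, ∑ s, x i s = 1)
    (ubar : Fin n → ℝ) (u r f b : ∀ i, S i → ℝ)
    (hfeas : ∀ (i : Fin n) (s : S i),
        (b i s = 0 ∨ b i s = 1) ∧
        u i s = purePayoff A x i s ∧
        u i s ≤ ubar i ∧
        r i s = ubar i - u i s ∧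
        0 ≤ r i s ∧
        x i s ≤ 1 - b i s ∧
        r i s ≤ f i s ∧
        payoffRange A i * b i s ≤ f i s)
    (hobj : ∑ i, ∑ s, (f i s - payoffRange A i * b i s) = 0) :
    ∀ (i : Fin n) (y : S i → ℝ), (∀ s, 0 ≤ y s) → ∑ s, y s = 1 →
      expPayoff A (Function.update x i y) i ≤ expPayoff A x i := by
  intro i y hy0 hy1
  have hf : ∀ j s, f j s = payoffRange A j * b j s :=
    eq_of_sum_sum_sub_eq_zero (fun j s => (hfeas j s).2.2.2.2.2.2.2) hobj
  have hle : ∀ s, purePayoff A x i s ≤ ubar i := fun s => by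
    obtain ⟨-, hu, hub, -⟩ := hfeas i s
    rwa [← hu]
  have hbest : ∀ s, x i s ≠ 0 → purePayoff A x i s = ubar i := fun s hxs => by
    obtain ⟨hb, hu, -, hr, hr0, hxb, hrf, -⟩ := hfeas i s
    rcases hb with hb0 | hb1
    · have : r i s = 0 := le_antisymm (by simpa [hf i s, hb0] using hrf) hr0
      linarith
    · exact absurd (le_antisymm (by linarith) (hx0 i s)) hxs
  rw [expPayoff_eq_of_purePayoff_eq_on_support A x i hbest (hx1 i)]
  exact expPayoff_update_le_of_purePayoff_le A x i hle hy0 hy1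

/-- If the mixed strategy profile `x` together with `ū^i`, `u^i_s`,
`r^i_s`, `f^i_s` and binary `b^i_s` satisfies the MIMLP2 constraints with objective value
`∑ᵢ ∑_{s ∈ S_i} (f^i_s − U^i b^i_s) = 0`, then `x` is a Nash equilibrium. -/
theorem mimlp2_optimal_gives_nash
    (n : ℕ) (hn : 2 ≤ n) (S : Fin n → Type)
    [∀ i, Fintype (S i)] [∀ i, Nonempty (S i)] [∀ i, DecidableEq (S i)]
    (A : Fin n → (∀ j, S j) → ℝ)
    (x : ∀ i, S i → ℝ)
    (hx0 : ∀ i s, 0 ≤ x i s) (hx1 : ∀ i, ∑ s, x i s = 1)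
    (ubar : Fin n → ℝ) (u r f b : ∀ i, S i → ℝ)
    (hfeas : ∀ (i : Fin n) (s : S i),
        (b i s = 0 ∨ b i s = 1) ∧
        u i s = purePayoff A x i s ∧
        u i s ≤ ubar i ∧
        r i s = ubar i - u i s ∧
        0 ≤ r i s ∧
        x i s ≤ 1 - b i s ∧
        r i s ≤ f i s ∧
        payoffRange A i * b i s ≤ f i s)
    (hobj : ∑ i, ∑ s, (f i s - payoffRange A i * b i s) = 0) :
    ∀ (i : Fin n) (y : S i → ℝ), (∀ s, 0 ≤ y s) → ∑ s, y s = 1 →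
      expPayoff A (Function.update x i y) i ≤ expPayoff A x i :=
  mimlp2_optimal_gives_nash_general n S A x hx0 hx1 ubar u r f b hfeas hobj
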